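/- arXiv:2006.14677 — 2 statements merged into one kernel-verified Lean document; each statement's English description precedes it below -/
import Mathlib

section
/- Let H be n hyperplanes in ℝ^d in d'-relaxed general position and N = span of the normals (dim N = d'). Then the induced arrangement Ĥ = {h ∩ N : h ∈ H} of n hyperplanes in the d'-dimensional space N is in d'-relaxed general position (i.e., in general position within N): every k ≤ d' of the induced hyperplanes intersect in a flat of dimension d' − k, and any more than d' of them have empty intersection. -/
open scoped RealInnerProductSpace Pointwise

noncomputable section

/-- The hyperplane in `ℝ^d` with normal vector `η` and bias `b`. -/
def Hyp {d : ℕ} (η : EuclideanSpace ℝ (Fin d)) (b : ℝ) : Set (EuclideanSpace ℝ (Fin d)) :=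
  {z | ⟪η, z⟫ + b = 0}

/-- `A` is an affine flat of dimension `m`: a coset of an `m`-dimensional subspace. -/
def IsFlatOfDim {d : ℕ} (A : Set (EuclideanSpace ℝ (Fin d))) (m : ℕ) : Prop :=
  ∃ (v : EuclideanSpace ℝ (Fin d)) (S : Submodule ℝ (EuclideanSpace ℝ (Fin d))),
    Module.finrank ℝ S = m ∧ A = v +ᵥ (S : Set (EuclideanSpace ℝ (Fin d)))

/-- The arrangement of the `n` hyperplanes `⟪η i, z⟫ + b i = 0` in `ℝ^d` is in
`d'`-relaxed general position: every nonempty subset of `k ≤ d'` of the hyperplanes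
intersects in a nonempty affine flat of dimension `d - k`, and every subset of more
than `d'` hyperplanes has empty intersection. -/
def RelaxedGeneralPosition {d n : ℕ} (d' : ℕ) (η : Fin n → EuclideanSpace ℝ (Fin d))
    (b : Fin n → ℝ) : Prop :=
  (∀ i, η i ≠ 0) ∧
  (∀ T : Finset (Fin n), T.Nonempty → T.card ≤ d' →
    IsFlatOfDim (⋂ i ∈ T, Hyp (η i) (b i)) (d - T.card)) ∧
  (∀ T : Finset (Fin n), d' < T.card → (⋂ i ∈ T, Hyp (η i) (b i)) = ∅)

/-!
If `x` lies on the hyperplanes indexed by `T`, their intersection is `x + (span η(T))ᗮ`, so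
general position says that any `k ≤ d'` normals are linearly independent. Moreover every normal
lies in the span of any `d'` of them: otherwise one could move inside the flat of those `d'`
hyperplanes to meet one more, contradicting emptiness of `d' + 1`-fold intersections. Hence
`dim N = d'`. Projecting a point of the flat orthogonally onto `N` keeps it in the flat, and the
flat meets `N` in a coset of `(span η(T))ᗮ ⊓ N`, whose dimension is `d' - k`.
-/

open Module Submodule

theorem Submodule.mem_orthogonal_span_iff {𝕜 E : Type*} [RCLike 𝕜] [NormedAddCommGroup E]
    [InnerProductSpace 𝕜 E] {s : Set E} {w : E} :
    w ∈ (span 𝕜 s)ᗮ ↔ ∀ v ∈ s, inner 𝕜 v w = 0 := by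
  rw [← span_singleton_le_iff_mem, ← isOrtho_iff_le, isOrtho_comm, isOrtho_span]
  simp

theorem Submodule.vadd_coe_inter_coe {R M : Type*} [Ring R] [AddCommGroup M] [Module R M]
    {W N : Submodule R M} {p : M} (hp : p ∈ N) :
    (p +ᵥ (W : Set M)) ∩ N = p +ᵥ ((W ⊓ N : Submodule R M) : Set M) := by
  rw [coe_inf, Set.vadd_set_inter, vadd_coe_set hp]

theorem isFlatOfDim_vadd_iff {d m : ℕ} {x : EuclideanSpace ℝ (Fin d)}
    {S : Submodule ℝ (EuclideanSpace ℝ (Fin d))} :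
    IsFlatOfDim (x +ᵥ (S : Set (EuclideanSpace ℝ (Fin d)))) m ↔ finrank ℝ S = m := by
  refine ⟨fun ⟨v, W, hW, hxS⟩ ↦ ?_, fun hS ↦ ⟨x, S, hS, rfl⟩⟩
  have hx : x ∈ v +ᵥ (W : Set (EuclideanSpace ℝ (Fin d))) := by
    simpa [hxS] using Set.vadd_mem_vadd_set (a := x) S.zero_mem
  have hvx : -x + v ∈ W := by
    simpa using W.neg_mem (Set.mem_vadd_set_iff_neg_vadd_mem.1 hx)
  have hSW : (S : Set (EuclideanSpace ℝ (Fin d))) = W :=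
    calc (S : Set (EuclideanSpace ℝ (Fin d)))
        = -x +ᵥ (x +ᵥ (S : Set _)) := (neg_vadd_vadd x _).symm
      _ = (-x + v) +ᵥ (W : Set _) := by rw [hxS, vadd_vadd]
      _ = W := vadd_coe_set hvx
  rwa [SetLike.coe_injective hSW]

section Hyperplanes

variable {ι : Type*} {d : ℕ} (η : ι → EuclideanSpace ℝ (Fin d)) (b : ι → ℝ)

theorem iInter_hyp_eq_vadd_orthogonal {T : Finset ι} {x : EuclideanSpace ℝ (Fin d)}
    (hx : x ∈ ⋂ i ∈ T, Hyp (η i) (b i)) :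
    ⋂ i ∈ T, Hyp (η i) (b i) = x +ᵥ ((span ℝ (η '' T))ᗮ : Set (EuclideanSpace ℝ (Fin d))) := by
  simp only [Set.mem_iInter, Hyp, Set.mem_ofPred_eq] at hx
  ext z
  simp only [Set.mem_iInter, Hyp, Set.mem_ofPred_eq, Set.mem_vadd_set_iff_neg_vadd_mem,
    SetLike.mem_coe, mem_orthogonal_span_iff, Set.forall_mem_image, vadd_eq_add,
    inner_add_right, inner_neg_right]
  refine forall₂_congr fun i hi ↦ ?_
  constructor <;> intro h <;> linarith [hx i hi]

theorem iInter_hyp_insert_nonempty [DecidableEq ι] {T : Finset ι} {j : ι}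
    (hT : (⋂ i ∈ T, Hyp (η i) (b i)).Nonempty) (hj : η j ∉ span ℝ (η '' T)) :
    (⋂ i ∈ insert j T, Hyp (η i) (b i)).Nonempty := by
  obtain ⟨x, hx⟩ := hT
  obtain ⟨w, hw, hwj⟩ : ∃ w ∈ (span ℝ (η '' T))ᗮ, ⟪w, η j⟫ ≠ 0 := by
    by_contra! h
    exact hj (orthogonal_orthogonal (span ℝ (η '' T)) ▸ (mem_orthogonal _ _).2 h)
  set t := -(⟪η j, x⟫ + b j) / ⟪w, η j⟫
  refine ⟨x + t • w, ?_⟩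
  rw [Finset.set_biInter_insert]
  refine ⟨?_, ?_⟩
  · simp only [Hyp, Set.mem_ofPred_eq, inner_add_right, inner_smul_right, real_inner_comm w,
      t, div_mul_cancel₀ _ hwj]
    ring
  · rw [iInter_hyp_eq_vadd_orthogonal η b hx]
    exact Set.vadd_mem_vadd_set (smul_mem _ t hw)

theorem starProjection_mem_iInter_hyp {T : Finset ι}
    (K : Submodule ℝ (EuclideanSpace ℝ (Fin d))) [K.HasOrthogonalProjection]
    (hK : ∀ i ∈ T, η i ∈ K) {x : EuclideanSpace ℝ (Fin d)}
    (hx : x ∈ ⋂ i ∈ T, Hyp (η i) (b i)) :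
    K.starProjection x ∈ ⋂ i ∈ T, Hyp (η i) (b i) := by
  simp only [Set.mem_iInter, Hyp, Set.mem_ofPred_eq] at hx ⊢
  intro i hi
  have hself := inner_starProjection_left_eq_right K (η i) x
  rw [starProjection_eq_self_iff.2 (hK i hi)] at hself
  rw [← hself]
  exact hx i hi

end Hyperplanes

namespace RelaxedGeneralPosition

variable {d n d' : ℕ} {η : Fin n → EuclideanSpace ℝ (Fin d)} {b : Fin n → ℝ}

theorem iInter_nonempty (hH : RelaxedGeneralPosition d' η b) {T : Finset (Fin n)}
    (hT : T.card ≤ d') :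
    (⋂ i ∈ T, Hyp (η i) (b i)).Nonempty := by
  obtain rfl | hTne := T.eq_empty_or_nonempty
  · simp
  obtain ⟨v, W, -, hA⟩ := hH.2.1 T hTne hT
  exact ⟨v, hA ▸ by simpa using Set.vadd_mem_vadd_set (a := v) W.zero_mem⟩

theorem finrank_span_image (hH : RelaxedGeneralPosition d' η b) (hd : d' ≤ d)
    {T : Finset (Fin n)} (hT : T.card ≤ d') :
    finrank ℝ (span ℝ (η '' T)) = T.card := by
  obtain rfl | hTne := T.eq_empty_or_nonempty
  · simp
  obtain ⟨x, hx⟩ := hH.iInter_nonempty hT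
  have hflat := hH.2.1 T hTne hT
  rw [iInter_hyp_eq_vadd_orthogonal η b hx, isFlatOfDim_vadd_iff] at hflat
  have hsum := finrank_add_finrank_orthogonal (span ℝ (η '' T))
  rw [finrank_euclideanSpace_fin] at hsum
  omega

theorem span_range_eq_span_image (hH : RelaxedGeneralPosition d' η b) {T : Finset (Fin n)}
    (hT : T.card = d') :
    span ℝ (Set.range η) = span ℝ (η '' T) := by
  refine le_antisymm (span_le.2 (Set.range_subset_iff.2 fun j ↦ ?_))
    (span_mono (Set.image_subset_range _ _))
  by_contra hj
  have hjT : j ∉ T := fun h ↦ hj (subset_span ⟨j, h, rfl⟩)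
  have hne := iInter_hyp_insert_nonempty η b (hH.iInter_nonempty hT.le) hj
  rw [hH.2.2 _ (by rw [Finset.card_insert_of_notMem hjT]; omega)] at hne
  exact Set.not_nonempty_empty hne

theorem finrank_span_range (hH : RelaxedGeneralPosition d' η b) (hd : d' ≤ d) (hn : d' ≤ n) :
    finrank ℝ (span ℝ (Set.range η)) = d' := by
  obtain ⟨T, -, hT⟩ := Finset.exists_subset_card_eq (s := (.univ : Finset (Fin n)))
    (by simpa using hn)
  rw [hH.span_range_eq_span_image hT, hH.finrank_span_image hd hT.le, hT]

end RelaxedGeneralPosition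

/-- If `H` is in `d'`-relaxed general position in `ℝ^d` and `N` is the span of the
normals, then the induced arrangement `{h ∩ N : h ∈ H}` in the `d'`-dimensional space
`N` is in general position within `N`: every nonempty collection of `k ≤ d'` induced
hyperplanes intersects in a flat of dimension `d' - k`, and any more than `d'` of them
have empty intersection. -/
theorem induced_arrangement_general_position {d n d' : ℕ} (hd : d' ≤ d) (hn : d' ≤ n)
    (η : Fin n → EuclideanSpace ℝ (Fin d)) (b : Fin n → ℝ)
    (hH : RelaxedGeneralPosition d' η b)
    (N : Submodule ℝ (EuclideanSpace ℝ (Fin d)))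
    (hN : N = Submodule.span ℝ (Set.range η)) :
    (∀ T : Finset (Fin n), T.Nonempty → T.card ≤ d' →
      IsFlatOfDim ((⋂ i ∈ T, Hyp (η i) (b i)) ∩ (N : Set (EuclideanSpace ℝ (Fin d))))
        (d' - T.card)) ∧
    (∀ T : Finset (Fin n), d' < T.card →
      (⋂ i ∈ T, Hyp (η i) (b i)) ∩ (N : Set (EuclideanSpace ℝ (Fin d))) = ∅) := by
  subst hN
  refine ⟨fun T _ hT ↦ ?_, fun T hT ↦ by rw [hH.2.2 T hT, Set.empty_inter]⟩
  obtain ⟨x, hx⟩ := hH.iInter_nonempty hT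
  have hp := starProjection_mem_iInter_hyp η b (span ℝ (Set.range η))
    (fun i _ ↦ subset_span ⟨i, rfl⟩) hx
  rw [iInter_hyp_eq_vadd_orthogonal η b hp, vadd_coe_inter_coe (starProjection_apply_mem _ x),
    isFlatOfDim_vadd_iff]
  have hsum :=
    finrank_add_inf_finrank_orthogonal (span_mono (R := ℝ) (Set.image_subset_range η T))
  rw [hH.finrank_span_image hd hT, hH.finrank_span_range hd hn] at hsum
  omega
end
end

section
/- If H is a set of n hyperplanes in ℝ^d whose arrangement is in d'-relaxed general position, then the number of regions (connected components of ℝ^d ∖ ⋃H) equals Σ_{i=0}^{d'} C(n, i). -/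
open scoped RealInnerProductSpace Pointwise

noncomputable section

/-!
Encode a region by its sign pattern: the set of hyperplanes having the region on their positive
side. Inside a flat `P`, deleting a hyperplane `H` from a family `s` and restricting to `P ∩ H`
gives the recurrence `#patterns(s, P) = #patterns(s \ H, P) + #patterns(s \ H, P ∩ H)`: a pattern
of `s \ H` splits in two exactly when it is realized on both sides of `H`, and then, by
convexity, also on `P ∩ H`; conversely a point of `P ∩ H` can be pushed off `H` to either side
within `P`, because `H` cuts `P` in a flat of smaller dimension. Relaxed general position is
inherited by `P ∩ H` with `d'` lowered by one, and Pascal's rule turns the recurrence into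
`∑_{i ≤ d'} C(n, i)`. Finally, the cells of constant sign are open and convex and partition the
complement of the hyperplanes, so they are its connected components.
-/

open Finset Filter Topology

theorem sum_range_choose_succ (N r : ℕ) :
    ∑ i ∈ range r, (N + 1).choose i =
      ∑ i ∈ range r, N.choose i + ∑ i ∈ range (r - 1), N.choose i := by
  rcases r with _ | k
  · simp
  · rw [sum_range_succ', sum_range_succ' (fun i => N.choose i)]
    simp only [Nat.choose_succ_succ', sum_add_distrib, Nat.choose_zero_right,
      add_tsub_cancel_right]
    ring

theorem Set.ncard_image_eq_ncard_image_of_iff {α β γ : Type*} {F : α → β} {G : α → γ}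
    {K : Set α} (h : ∀ x ∈ K, ∀ y ∈ K, F x = F y ↔ G x = G y) :
    (F '' K).ncard = (G '' K).ncard := by
  refine Set.ncard_congr (fun _ hR => G hR.choose) (fun _ hR => ⟨_, hR.choose_spec.1, rfl⟩)
    (fun R R' hR hR' hG => ?_) ?_
  · rw [← hR.choose_spec.2, ← hR'.choose_spec.2]
    exact (h _ hR.choose_spec.1 _ hR'.choose_spec.1).2 hG
  · rintro _ ⟨x, hx, rfl⟩
    have hFx : F x ∈ F '' K := ⟨x, hx, rfl⟩
    exact ⟨F x, hFx, (h _ hFx.choose_spec.1 _ hx).1 hFx.choose_spec.2⟩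

section AffineFunctional

variable {E : Type*} [AddCommGroup E] [Module ℝ E] (g : E →ᵃ[ℝ] ℝ)

theorem AffineMap.apply_add_smul (z u : E) (t : ℝ) : g (z + t • u) = g z + t * g.linear u := by
  rw [add_comm z, ← vadd_eq_add, g.map_vadd, map_smul, vadd_eq_add, smul_eq_mul, add_comm]

theorem AffineMap.exists_mem_segment_eq_zero {x y : E} (hx : g x < 0) (hy : 0 < g y) :
    ∃ w ∈ segment ℝ x y, g w = 0 := by
  have hxy : 0 < g y - g x := by linarith
  refine ⟨AffineMap.lineMap x y (-g x / (g y - g x)),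
    lineMap_mem_segment ℝ x y ⟨div_nonneg (by linarith) hxy.le, ?_⟩, ?_⟩
  · rw [div_le_one hxy]
    linarith
  · rw [AffineMap.apply_lineMap, AffineMap.lineMap_apply_module', smul_eq_mul]
    field_simp
    ring

end AffineFunctional

namespace Arrangement

variable {ι E : Type*} [AddCommGroup E] [Module ℝ E]

section Definitions

variable (f : ι → E →ᵃ[ℝ] ℝ)

/-- A sign pattern on `s` is encoded by the indices on whose positive side the point lies. -/
def signSet (s : Finset ι) (z : E) : Finset ι := {i ∈ s | 0 < f i z}

def signPatterns (s : Finset ι) (P : Set E) : Set (Finset ι) :=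
  signSet f s '' {z ∈ P | ∀ i ∈ s, f i z ≠ 0}

/-- `0 < f i w * f i z`: strictly on the same side of the `i`-th hyperplane as `z`. -/
def sameSignCell (s : Finset ι) (z : E) : Set E := {w | ∀ i ∈ s, 0 < f i w * f i z}

end Definitions

variable {f : ι → E →ᵃ[ℝ] ℝ}

theorem mem_sameSignCell_self {s : Finset ι} {z : E} (hz : ∀ i ∈ s, f i z ≠ 0) :
    z ∈ sameSignCell f s z :=
  fun i hi => mul_self_pos.2 (hz i hi)

theorem ne_zero_of_mem_sameSignCell {s : Finset ι} {z w : E} (hw : w ∈ sameSignCell f s z) :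
    ∀ i ∈ s, f i w ≠ 0 :=
  fun i hi => left_ne_zero_of_mul (hw i hi).ne'

theorem signSet_eq_iff_mem_sameSignCell {s : Finset ι} {z w : E}
    (hz : ∀ i ∈ s, f i z ≠ 0) (hw : ∀ i ∈ s, f i w ≠ 0) :
    signSet f s w = signSet f s z ↔ w ∈ sameSignCell f s z := by
  rw [signSet, signSet, Finset.filter_inj']
  refine forall₂_congr fun i hi => ?_
  rcases (hw i hi).lt_or_gt with hwi | hwi <;> rcases (hz i hi).lt_or_gt with hzi | hzi <;>
    simp [mul_pos_iff, hwi, hzi, hwi.not_gt, hzi.not_gt]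

theorem signSet_mem_signPatterns {s : Finset ι} {P : Set E} {z w : E}
    (hz : ∀ i ∈ s, f i z ≠ 0) (hwP : w ∈ P) (hw : w ∈ sameSignCell f s z) :
    signSet f s z ∈ signPatterns f s P :=
  ⟨w, ⟨hwP, ne_zero_of_mem_sameSignCell hw⟩,
    (signSet_eq_iff_mem_sameSignCell hz (ne_zero_of_mem_sameSignCell hw)).2 hw⟩

theorem subset_of_mem_signPatterns {s : Finset ι} {P : Set E} {A : Finset ι}
    (hA : A ∈ signPatterns f s P) : A ⊆ s := by
  obtain ⟨z, -, rfl⟩ := hA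
  exact filter_subset _ s

theorem signPatterns_finite (s : Finset ι) (P : Set E) : (signPatterns f s P).Finite :=
  s.powerset.finite_toSet.subset fun _ hA => mem_powerset.2 (subset_of_mem_signPatterns hA)

theorem signPatterns_mono {s : Finset ι} {P Q : Set E} (h : P ⊆ Q) :
    signPatterns f s P ⊆ signPatterns f s Q :=
  Set.image_mono fun _ hz => ⟨h hz.1, hz.2⟩

theorem signPatterns_empty {P : Set E} (hP : P.Nonempty) : signPatterns f ∅ P = {∅} := by
  have hsign : signSet f ∅ = fun _ => ∅ := funext fun _ => filter_empty _
  simpa [signPatterns, hsign] using hP.image_const (∅ : Finset ι)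

section Deletion

variable [DecidableEq ι] {s : Finset ι} {j : ι}

theorem sep_forall_erase_ne_zero {Q : Set E} (hQ : ∀ z ∈ Q, f j z ≠ 0) :
    {z ∈ Q | ∀ i ∈ s.erase j, f i z ≠ 0} = {z ∈ Q | ∀ i ∈ s, f i z ≠ 0} := by
  ext z
  refine and_congr_right fun hzQ => ⟨fun h i hi => ?_, fun h i hi => h i (mem_of_mem_erase hi)⟩
  obtain rfl | hij := eq_or_ne i j
  · exact hQ z hzQ
  · exact h i (mem_erase.2 ⟨hij, hi⟩)

theorem signPatterns_erase_of_neg {Q : Set E} (hQ : ∀ z ∈ Q, f j z < 0) :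
    signPatterns f (s.erase j) Q = signPatterns f s Q := by
  rw [signPatterns, signPatterns, sep_forall_erase_ne_zero fun z hz => (hQ z hz).ne]
  refine Set.image_congr fun z hz => ?_
  rw [signSet, signSet, filter_erase, erase_eq_of_notMem]
  simp [(hQ z hz.1).le]

theorem signPatterns_of_pos {Q : Set E} (hj : j ∈ s) (hQ : ∀ z ∈ Q, 0 < f j z) :
    signPatterns f s Q = insert j '' signPatterns f (s.erase j) Q := by
  rw [signPatterns, signPatterns, sep_forall_erase_ne_zero fun z hz => (hQ z hz).ne',
    Set.image_image]
  refine Set.image_congr fun z hz => ?_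
  conv_lhs => rw [signSet, ← insert_erase hj, filter_insert, if_pos (hQ z hz.1)]
  rfl

theorem ncard_signPatterns_eq_neg_add_pos {P : Set E} (hj : j ∈ s) :
    (signPatterns f s P).ncard =
      (signPatterns f (s.erase j) (P ∩ {z | f j z < 0})).ncard +
        (signPatterns f (s.erase j) (P ∩ {z | 0 < f j z})).ncard := by
  have hsplit : signPatterns f s P =
      signPatterns f s (P ∩ {z | f j z < 0}) ∪ signPatterns f s (P ∩ {z | 0 < f j z}) := by
    rw [signPatterns, signPatterns, signPatterns, ← Set.image_union]
    congr 1
    ext z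
    simp only [Set.mem_union, Set.mem_ofPred_eq, Set.mem_inter_iff]
    refine ⟨fun ⟨hzP, hz⟩ => ?_, by rintro (⟨⟨hzP, -⟩, hz⟩ | ⟨⟨hzP, -⟩, hz⟩) <;> exact ⟨hzP, hz⟩⟩
    rcases (hz j hj).lt_or_gt with hzj | hzj
    exacts [Or.inl ⟨⟨hzP, hzj⟩, hz⟩, Or.inr ⟨⟨hzP, hzj⟩, hz⟩]
  have hdisj : Disjoint (signPatterns f s (P ∩ {z | f j z < 0}))
      (signPatterns f s (P ∩ {z | 0 < f j z})) := by
    rw [Set.disjoint_left]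
    rintro _ ⟨x, ⟨⟨-, hxj⟩, -⟩, rfl⟩ ⟨y, ⟨⟨-, hyj⟩, -⟩, hyx⟩
    have hjy : j ∈ signSet f s y := mem_filter.2 ⟨hj, hyj⟩
    rw [hyx, signSet, mem_filter] at hjy
    exact lt_asymm hxj hjy.2
  have hinj : Set.InjOn (insert j) (signPatterns f (s.erase j) (P ∩ {z | 0 < f j z})) := by
    intro A hA B hB hAB
    have hjA : j ∉ A := fun h => notMem_erase j s (subset_of_mem_signPatterns hA h)
    have hjB : j ∉ B := fun h => notMem_erase j s (subset_of_mem_signPatterns hB h)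
    rw [← erase_insert hjA, ← erase_insert hjB, hAB]
  rw [hsplit, Set.ncard_union_eq hdisj (signPatterns_finite _ _) (signPatterns_finite _ _),
    signPatterns_erase_of_neg fun z hz => hz.2,
    signPatterns_of_pos (Q := P ∩ {z | 0 < f j z}) hj fun z hz => hz.2, hinj.ncard_image]

end Deletion

theorem convex_sameSignCell (s : Finset ι) (z : E) : Convex ℝ (sameSignCell f s z) := by
  intro x hx y hy a b ha hb hab i hi
  have key := convex_Ioi (0 : ℝ) (hx i hi) (hy i hi) ha hb hab
  rw [Convex.combo_affine_apply hab]
  simp only [Set.mem_Ioi, smul_eq_mul] at key ⊢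
  linarith

theorem eventually_add_smul_mem_sameSignCell {s : Finset ι} {z : E} (hz : ∀ i ∈ s, f i z ≠ 0)
    (u : E) : ∀ᶠ t in 𝓝 (0 : ℝ), z + t • u ∈ sameSignCell f s z := by
  simp only [sameSignCell, Set.mem_ofPred_eq]
  refine (eventually_all_finset s).2 fun i hi => ?_
  have hcont : Continuous fun t : ℝ => f i (z + t • u) * f i z := by
    simp only [AffineMap.apply_add_smul]
    fun_prop
  refine (hcont.tendsto 0).eventually_const_lt ?_
  simpa using mul_self_pos.2 (hz i hi)

theorem signSet_mem_signPatterns_neg_inter_pos {s : Finset ι} {P : Set E} {j : ι} {z u : E}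
    (hz : ∀ i ∈ s, f i z ≠ 0) (hzj : f j z = 0) (hu : 0 < (f j).linear u)
    (hline : ∀ t : ℝ, z + t • u ∈ P) :
    signSet f s z ∈ signPatterns f s (P ∩ {w | f j w < 0}) ∩
      signPatterns f s (P ∩ {w | 0 < f j w}) := by
  have hcell := eventually_add_smul_mem_sameSignCell hz u
  obtain ⟨tneg, htneg, hneg⟩ :=
    ((hcell.filter_mono nhdsWithin_le_nhds).and (self_mem_nhdsWithin (s := Set.Iio 0))).exists
  obtain ⟨tpos, htpos, hpos⟩ :=
    ((hcell.filter_mono nhdsWithin_le_nhds).and (self_mem_nhdsWithin (s := Set.Ioi 0))).exists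
  refine ⟨signSet_mem_signPatterns hz ⟨hline tneg, ?_⟩ htneg,
    signSet_mem_signPatterns hz ⟨hline tpos, ?_⟩ htpos⟩
  · simpa [AffineMap.apply_add_smul, hzj] using mul_neg_of_neg_of_pos hneg hu
  · simpa [AffineMap.apply_add_smul, hzj] using mul_pos hpos hu

section Restriction

variable {P : Set E} {j : ι}
  (hline : ∀ z ∈ P, f j z = 0 → ∃ u, 0 < (f j).linear u ∧ ∀ t : ℝ, z + t • u ∈ P)
include hline

theorem signPatterns_neg_union_pos (s : Finset ι) :
    signPatterns f s (P ∩ {z | f j z < 0}) ∪ signPatterns f s (P ∩ {z | 0 < f j z}) =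
      signPatterns f s P := by
  refine (Set.union_subset (signPatterns_mono Set.inter_subset_left)
    (signPatterns_mono Set.inter_subset_left)).antisymm ?_
  rintro _ ⟨z, ⟨hzP, hz⟩, rfl⟩
  rcases lt_trichotomy (f j z) 0 with hzj | hzj | hzj
  · exact Or.inl ⟨z, ⟨⟨hzP, hzj⟩, hz⟩, rfl⟩
  · obtain ⟨u, hu, hzu⟩ := hline z hzP hzj
    exact Or.inl (signSet_mem_signPatterns_neg_inter_pos hz hzj hu hzu).1
  · exact Or.inr ⟨z, ⟨⟨hzP, hzj⟩, hz⟩, rfl⟩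

theorem signPatterns_neg_inter_pos (hP : Convex ℝ P) (s : Finset ι) :
    signPatterns f s (P ∩ {z | f j z < 0}) ∩ signPatterns f s (P ∩ {z | 0 < f j z}) =
      signPatterns f s (P ∩ {z | f j z = 0}) := by
  refine subset_antisymm ?_ ?_
  · rintro _ ⟨⟨x, ⟨⟨hxP, hxj⟩, hx⟩, rfl⟩, ⟨y, ⟨⟨hyP, hyj⟩, hy⟩, hyx⟩⟩
    rw [signSet_eq_iff_mem_sameSignCell hx hy] at hyx
    obtain ⟨w, hw, hwj⟩ := (f j).exists_mem_segment_eq_zero hxj hyj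
    exact signSet_mem_signPatterns hx ⟨hP.segment_subset hxP hyP hw, hwj⟩
      ((convex_sameSignCell s x).segment_subset (mem_sameSignCell_self hx) hyx hw)
  · rintro _ ⟨z, ⟨⟨hzP, hzj⟩, hz⟩, rfl⟩
    obtain ⟨u, hu, hzu⟩ := hline z hzP hzj
    exact signSet_mem_signPatterns_neg_inter_pos hz hzj hu hzu

theorem ncard_signPatterns_eq_erase_add_restrict [DecidableEq ι] (hP : Convex ℝ P)
    {s : Finset ι} (hj : j ∈ s) :
    (signPatterns f s P).ncard =
      (signPatterns f (s.erase j) P).ncard +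
        (signPatterns f (s.erase j) (P ∩ {z | f j z = 0})).ncard := by
  rw [ncard_signPatterns_eq_neg_add_pos hj, ← signPatterns_neg_union_pos hline,
    ← signPatterns_neg_inter_pos hline hP,
    Set.ncard_union_add_ncard_inter _ _ (signPatterns_finite _ _) (signPatterns_finite _ _)]

end Restriction

end Arrangement

namespace IsFlatOfDim

variable {d m : ℕ} {A : Set (EuclideanSpace ℝ (Fin d))}

theorem exists_affineSubspace (h : IsFlatOfDim A m) :
    ∃ Q : AffineSubspace ℝ (EuclideanSpace ℝ (Fin d)),
      (Q : Set (EuclideanSpace ℝ (Fin d))) = A ∧ A.Nonempty ∧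
        Module.finrank ℝ Q.direction = m := by
  obtain ⟨v, S, hS, rfl⟩ := h
  refine ⟨AffineSubspace.mk' v S, ?_, ⟨v, ?_⟩, by rwa [AffineSubspace.direction_mk']⟩
  · ext z
    simp [AffineSubspace.mem_mk', Set.mem_vadd_set_iff_neg_vadd_mem, neg_add_eq_sub]
  · simpa using Set.vadd_mem_vadd_set (a := v) (zero_mem S)

theorem nonempty (h : IsFlatOfDim A m) : A.Nonempty :=
  h.exists_affineSubspace.choose_spec.2.1

theorem convex (h : IsFlatOfDim A m) : Convex ℝ A := by
  obtain ⟨Q, rfl, -⟩ := h.exists_affineSubspace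
  exact Q.convex

theorem unique {m' : ℕ} (h : IsFlatOfDim A m) (h' : IsFlatOfDim A m') : m = m' := by
  obtain ⟨Q, rfl, -, rfl⟩ := h.exists_affineSubspace
  obtain ⟨Q', hQQ', -, rfl⟩ := h'.exists_affineSubspace
  rw [SetLike.coe_injective hQQ']

theorem exists_transversal {m' : ℕ} {g : EuclideanSpace ℝ (Fin d) →ᵃ[ℝ] ℝ}
    (h : IsFlatOfDim A m) (hg : IsFlatOfDim (A ∩ {z | g z = 0}) m') (hm : m' ≠ m)
    {z : EuclideanSpace ℝ (Fin d)} (hz : z ∈ A) : ∃ u, 0 < g.linear u ∧ ∀ t : ℝ, z + t • u ∈ A := by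
  obtain ⟨Q, rfl, -⟩ := h.exists_affineSubspace
  obtain ⟨u, huQ, hu⟩ : ∃ u ∈ Q.direction, g.linear u ≠ 0 := by
    by_contra! hlin
    have hconst : ∀ x ∈ Q, g x = g z := fun x hx => by
      rw [← vsub_vadd x z, g.map_vadd, hlin _ (Q.vsub_mem_direction hx hz), zero_vadd]
    obtain ⟨w, hwQ, hwg⟩ := hg.nonempty
    have hQg : (Q : Set _) ∩ {z | g z = 0} = Q := Set.inter_eq_left.2 fun x hx =>
      ((hconst x hx).trans (hconst w hwQ).symm).trans hwg
    rw [hQg] at hg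
    exact hm (hg.unique h)
  refine ⟨g.linear u • u, by simpa using mul_self_pos.2 hu, fun t => ?_⟩
  rw [add_comm, ← vadd_eq_add]
  exact Q.vadd_mem_of_mem_direction (Q.direction.smul_mem t (Q.direction.smul_mem _ huQ)) hz

end IsFlatOfDim

theorem isFlatOfDim_univ {d : ℕ} : IsFlatOfDim (Set.univ : Set (EuclideanSpace ℝ (Fin d))) d :=
  ⟨0, ⊤, by rw [finrank_top, finrank_euclideanSpace_fin], by simp⟩

namespace Arrangement

variable {ι : Type*} {d : ℕ}

/-- `r` plays the role of `d' + 1`, so that `r = 0` can describe `P = ∅`, which restricting to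
a hyperplane produces when `d' = 0`. -/
def FlatGeneralPosition (f : ι → EuclideanSpace ℝ (Fin d) →ᵃ[ℝ] ℝ) (s : Finset ι)
    (P : Set (EuclideanSpace ℝ (Fin d))) (m r : ℕ) : Prop :=
  (∀ T ⊆ s, T.card < r → IsFlatOfDim (P ∩ ⋂ i ∈ T, {z | f i z = 0}) (m - T.card)) ∧
    ∀ T ⊆ s, r ≤ T.card → P ∩ ⋂ i ∈ T, {z | f i z = 0} = ∅

namespace FlatGeneralPosition

variable {f : ι → EuclideanSpace ℝ (Fin d) →ᵃ[ℝ] ℝ} {s : Finset ι}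
  {P : Set (EuclideanSpace ℝ (Fin d))} {m r : ℕ}

theorem mono (h : FlatGeneralPosition f s P m r) {s' : Finset ι} (hs : s' ⊆ s) :
    FlatGeneralPosition f s' P m r :=
  ⟨fun T hT => h.1 T (hT.trans hs), fun T hT => h.2 T (hT.trans hs)⟩

theorem eq_empty (h : FlatGeneralPosition f s P m 0) : P = ∅ := by
  simpa using h.2 ∅ (empty_subset s) le_rfl

theorem isFlatOfDim (h : FlatGeneralPosition f s P m r) (hr : 0 < r) : IsFlatOfDim P m := by
  simpa using h.1 ∅ (empty_subset s) hr

theorem convex (h : FlatGeneralPosition f s P m r) : Convex ℝ P := by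
  rcases r.eq_zero_or_pos with rfl | hr
  · rw [h.eq_empty]
    exact convex_empty
  · exact (h.isFlatOfDim hr).convex

theorem exists_transversal (h : FlatGeneralPosition f s P m r) (hr : r ≤ m + 1) {j : ι}
    (hj : j ∈ s) {z : EuclideanSpace ℝ (Fin d)} (hz : z ∈ P) (hzj : f j z = 0) :
    ∃ u, 0 < (f j).linear u ∧ ∀ t : ℝ, z + t • u ∈ P := by
  by_cases h2 : 2 ≤ r
  · have hPj := h.1 {j} (singleton_subset_iff.2 hj) (by rw [card_singleton]; omega)
    rw [set_biInter_singleton, card_singleton] at hPj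
    exact (h.isFlatOfDim (by omega)).exists_transversal hPj (by omega) hz
  · have hPj := h.2 {j} (singleton_subset_iff.2 hj) (by rw [card_singleton]; omega)
    rw [set_biInter_singleton] at hPj
    exact absurd hPj (Set.nonempty_iff_ne_empty.1 ⟨z, hz, hzj⟩)

theorem restrict [DecidableEq ι] {j : ι} (h : FlatGeneralPosition f (insert j s) P m r)
    (hj : j ∉ s) : FlatGeneralPosition f s (P ∩ {z | f j z = 0}) (m - 1) (r - 1) := by
  have hinsert : ∀ T : Finset ι, P ∩ ⋂ i ∈ insert j T, {z | f i z = 0} =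
      (P ∩ {z | f j z = 0}) ∩ ⋂ i ∈ T, {z | f i z = 0} := fun T => by
    rw [set_biInter_insert, Set.inter_assoc]
  refine ⟨fun T hT hTr => ?_, fun T hT hTr => ?_⟩ <;>
    have hcard := card_insert_of_notMem fun h => hj (hT h)
  · have := h.1 (insert j T) (insert_subset_insert j hT) (by omega)
    rwa [hinsert, hcard, ← Nat.sub_sub, Nat.sub_right_comm] at this
  · rw [← hinsert]
    exact h.2 (insert j T) (insert_subset_insert j hT) (by omega)

theorem ncard_signPatterns [DecidableEq ι] (h : FlatGeneralPosition f s P m r)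
    (hr : r ≤ m + 1) : (signPatterns f s P).ncard = ∑ i ∈ range r, s.card.choose i := by
  induction s using Finset.induction_on generalizing P m r with
  | empty =>
    rcases r with _ | k
    · simp [h.eq_empty, signPatterns]
    · rw [signPatterns_empty (h.isFlatOfDim k.succ_pos).nonempty, Set.ncard_singleton,
        sum_range_succ']
      simp
  | insert j s hj ih =>
    rw [ncard_signPatterns_eq_erase_add_restrict
        (fun z hz hzj => h.exists_transversal hr (mem_insert_self j s) hz hzj) h.convex
        (mem_insert_self j s),
      erase_insert hj, ih (h.mono (subset_insert j s)) hr, ih (h.restrict hj) (by omega),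
      card_insert_of_notMem hj, sum_range_choose_succ]

end FlatGeneralPosition

end Arrangement

namespace Arrangement

variable {ι E : Type*} [Fintype ι] [TopologicalSpace E] [AddCommGroup E] [Module ℝ E]
  [IsTopologicalAddGroup E] [ContinuousSMul ℝ E] {f : ι → E →ᵃ[ℝ] ℝ}

theorem connectedComponentIn_eq_sameSignCell (hf : ∀ i, Continuous (f i)) {z : E}
    (hz : z ∈ (⋃ i, {w | f i w = 0})ᶜ) :
    connectedComponentIn (⋃ i, {w | f i w = 0})ᶜ z = sameSignCell f univ z := by
  have hmem : ∀ {w}, w ∈ (⋃ i, {w | f i w = 0})ᶜ ↔ ∀ i ∈ univ, f i w ≠ 0 := by simp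
  have hopen : IsOpen (sameSignCell f univ z) := by
    simp only [sameSignCell, Set.ofPred_forall]
    exact isOpen_biInter_finset fun i _ => isOpen_lt continuous_const ((hf i).mul continuous_const)
  have hopen' : IsOpen {w | ∃ i, f i w * f i z < 0} := by
    simp only [Set.ofPred_exists]
    exact isOpen_iUnion fun i => isOpen_lt ((hf i).mul continuous_const) continuous_const
  refine subset_antisymm ?_ ?_
  · refine isPreconnected_connectedComponentIn.subset_left_of_subset_union hopen hopen'
      ?_ ?_ ⟨z, mem_connectedComponentIn hz, mem_sameSignCell_self (hmem.1 hz)⟩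
    · rw [Set.disjoint_left]
      rintro w hw ⟨i, hi⟩
      exact (hw i (mem_univ i)).not_gt hi
    · intro w hw
      by_cases hcell : w ∈ sameSignCell f univ z
      · exact Or.inl hcell
      · obtain ⟨i, -, hi⟩ := not_forall₂.1 hcell
        refine Or.inr ⟨i, (not_lt.1 hi).lt_of_ne ?_⟩
        exact mul_ne_zero (hmem.1 (connectedComponentIn_subset _ _ hw) i (mem_univ i))
          (hmem.1 hz i (mem_univ i))
  · exact (convex_sameSignCell univ z).isPreconnected.subset_connectedComponentIn
      (mem_sameSignCell_self (hmem.1 hz))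
      fun w hw => hmem.2 (ne_zero_of_mem_sameSignCell hw)

theorem ncard_connectedComponentIn_image_eq (hf : ∀ i, Continuous (f i)) :
    (connectedComponentIn (⋃ i, {w | f i w = 0})ᶜ '' (⋃ i, {w | f i w = 0})ᶜ).ncard =
      (signPatterns f univ Set.univ).ncard := by
  have hK : (⋃ i, {w | f i w = 0})ᶜ = {z ∈ Set.univ | ∀ i ∈ univ, f i z ≠ 0} := by
    ext; simp
  rw [signPatterns, ← hK]
  refine Set.ncard_image_eq_ncard_image_of_iff fun x hx y hy => ?_
  rw [hK] at hx hy
  rw [eq_comm (a := signSet f univ x), signSet_eq_iff_mem_sameSignCell hx.2 hy.2,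
    ← connectedComponentIn_eq_sameSignCell hf (hK ▸ hx)]
  exact ⟨fun h => h ▸ mem_connectedComponentIn (hK ▸ hy), fun h => connectedComponentIn_eq h⟩

end Arrangement

def hypAffineMap {d : ℕ} (η : EuclideanSpace ℝ (Fin d)) (b : ℝ) :
    EuclideanSpace ℝ (Fin d) →ᵃ[ℝ] ℝ :=
  (innerₛₗ ℝ η).toAffineMap + AffineMap.const ℝ _ b

theorem hyp_eq_setOf_hypAffineMap {d : ℕ} (η : EuclideanSpace ℝ (Fin d)) (b : ℝ) :
    Hyp η b = {z | hypAffineMap η b z = 0} :=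
  rfl

theorem RelaxedGeneralPosition.flatGeneralPosition {d n d' : ℕ}
    {η : Fin n → EuclideanSpace ℝ (Fin d)} {b : Fin n → ℝ} (hH : RelaxedGeneralPosition d' η b) :
    Arrangement.FlatGeneralPosition (fun i => hypAffineMap (η i) (b i)) univ Set.univ d
      (d' + 1) := by
  obtain ⟨-, hflat, hempty⟩ := hH
  simp only [hyp_eq_setOf_hypAffineMap] at hflat hempty
  refine ⟨fun T _ hT => ?_, fun T _ hT => by simpa using hempty T (by omega)⟩
  rcases T.eq_empty_or_nonempty with rfl | hT₀
  · simpa using isFlatOfDim_univ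
  · simpa using hflat T hT₀ (by omega)

/-- If an arrangement of `n` hyperplanes in `ℝ^d` is in `d'`-relaxed general position
(`d' ≤ d`), then the number of regions (connected components of the complement of the
union of the hyperplanes) equals `∑_{i=0}^{d'} C(n, i)`. -/
theorem regions_relaxed_general_position {d n d' : ℕ} (hd : d' ≤ d)
    (η : Fin n → EuclideanSpace ℝ (Fin d)) (b : Fin n → ℝ)
    (hH : RelaxedGeneralPosition d' η b) :
    {R : Set (EuclideanSpace ℝ (Fin d)) |
        ∃ u ∈ (⋃ i, Hyp (η i) (b i))ᶜ, R = connectedComponentIn (⋃ i, Hyp (η i) (b i))ᶜ u}.ncard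
      = ∑ i ∈ Finset.range (d' + 1), n.choose i := by
  set f := fun i => hypAffineMap (η i) (b i)
  set K := (⋃ i, {z | f i z = 0})ᶜ
  have hregions : {R | ∃ u ∈ K, R = connectedComponentIn K u} = connectedComponentIn K '' K := by
    ext
    simp [eq_comm]
  simp only [hyp_eq_setOf_hypAffineMap]
  rw [hregions, Arrangement.ncard_connectedComponentIn_image_eq
      fun i => (f i).continuous_of_finiteDimensional,
    hH.flatGeneralPosition.ncard_signPatterns (by omega), card_univ, Fintype.card_fin]
end
end
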